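/- Let μ be a partition of k, and let 1^k denote the weight (1, 1, …, 1) with k parts. Then K_{(n−k,μ),(n−k,1^k)}·dim (n−k,μ) / (n!/(n−k)!) tends to (dim μ)²/k! as n → ∞; that is, for partitions of ℕ-type consisting of one growing first row and k singleton parts, the limiting spectral weights are the Plancherel weights (dim μ)²/k!. -/

import Mathlib

open scoped BigOperators

/-- The Kostka number `K_{μ,w}`: the number of semistandard Young tableaux of shape `μ` and
weight `w`, i.e. having exactly `w i` entries equal to `i` for each `i`. -/
noncomputable def kostka (μ : YoungDiagram) (w : ℕ → ℕ) : ℕ :=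
  Nat.card {T : SemistandardYoungTableau μ //
    ∀ i : ℕ, (μ.cells.filter fun c => T c.1 c.2 = i).card = w i}

/-- The number of saturated chains `μ = t₀ ⊂ t₁ ⊂ ⋯ ⊂ t_m = ν` of Young diagrams in which each
`t_{i+1}` is obtained from `t_i` by adding one cell (the number of standard skew tableaux of
shape `ν/μ`). -/
noncomputable def chainCount (μ ν : YoungDiagram) (m : ℕ) : ℕ :=
  Nat.card {t : Fin (m + 1) → YoungDiagram //
    t 0 = μ ∧ t (Fin.last m) = ν ∧
    ∀ i : Fin m, t i.castSucc ≤ t i.succ ∧ (t i.succ).card = (t i.castSucc).card + 1}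

/-- `dimSYT μ` is the number of standard Young tableaux of shape `μ`: the number of saturated
chains from the empty diagram to `μ` adding one cell at a time. -/
noncomputable def dimSYT (μ : YoungDiagram) : ℕ :=
  chainCount ⊥ μ μ.card

/-- The two-row Young diagram `(a, b)` (for `b ≤ a`). -/
def twoRow (a b : ℕ) : YoungDiagram :=
  YoungDiagram.ofRowLens [a, min a b] (by simp [List.sortedGE_iff_pairwise])

/-- The dominance order on Young diagrams: `dominates μ ν` means `μ ⊵ ν`, i.e. every partial
sum of row lengths of `μ` is at least the corresponding partial sum for `ν`. -/
def dominates (μ ν : YoungDiagram) : Prop :=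
  ∀ m : ℕ, ∑ i ∈ Finset.range m, ν.rowLen i ≤ ∑ i ∈ Finset.range m, μ.rowLen i

/-!
Write `(m, μ)` for `μ` with a first row of length `m ≥ μ₁` put on top, and `k = |μ|`. In a
tableau of shape `(m, μ)` and weight `(m, 1^k)` the `m` zeros must fill the first row, so the rest
is a standard filling of `μ` and the Kostka number is `dim μ`.

Deleting the largest entry of a standard tableau gives the branching rule `dim λ = ∑ dim λ⁻` over
the diagrams `λ⁻` obtained from `λ` by removing a corner. For `λ = (m, μ)` the corner is either
the end of the first row or a corner of `μ`, and induction with Pascal's rule gives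
`C(m + k - μ₁, k) · dim μ ≤ dim (m, μ) ≤ C(m + k, k) · dim μ`. For `n = m + k` both binomials are
asymptotic to `n^k / k!` while `n!/(n-k)! = k! · C(n, k)`, which squeezes the ratio to
`(dim μ)² / k!`.
-/

namespace YoungDiagram

lemma rowLen_eq_of_mem_iff {μ : YoungDiagram} {i r : ℕ} (h : ∀ j, (i, j) ∈ μ ↔ j < r) :
    μ.rowLen i = r := by
  refine le_antisymm (not_lt.1 fun hr => ?_) (not_lt.1 fun hr => ?_)
  · exact absurd ((h r).1 (mem_iff_lt_rowLen.2 hr)) (lt_irrefl r)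
  · exact absurd (mem_iff_lt_rowLen.1 ((h _).2 hr)) (lt_irrefl _)

lemma rowLen_mono {μ ν : YoungDiagram} (h : μ ≤ ν) (i : ℕ) : μ.rowLen i ≤ ν.rowLen i :=
  not_lt.1 fun hlt => (mem_iff_lt_rowLen.1 (h (mem_iff_lt_rowLen.2 hlt))).false

@[simp]
lemma rowLen_bot (i : ℕ) : (⊥ : YoungDiagram).rowLen i = 0 :=
  rowLen_eq_of_mem_iff fun j => by simp [notMem_bot]

@[simp]
lemma card_bot : (⊥ : YoungDiagram).card = 0 := by
  simp [YoungDiagram.card, cells_bot]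

lemma card_mono {μ ν : YoungDiagram} (h : μ ≤ ν) : μ.card ≤ ν.card :=
  Finset.card_le_card (cells_subset_iff.2 h)

lemma eq_of_le_of_card_le {μ ν : YoungDiagram} (h : μ ≤ ν) (hc : ν.card ≤ μ.card) : μ = ν :=
  YoungDiagram.ext (Finset.eq_of_subset_of_card_le (cells_subset_iff.2 h) hc)

lemma eq_bot_of_card_eq_zero {μ : YoungDiagram} (h : μ.card = 0) : μ = ⊥ :=
  YoungDiagram.ext (by rw [Finset.card_eq_zero.1 h, cells_bot])

lemma finite_Iic (ν : YoungDiagram) : (Set.Iic ν).Finite :=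
  ((ν.cells.powerset : Set (Finset (ℕ × ℕ))).toFinite.preimage
    (fun _ _ _ _ h => YoungDiagram.ext h)).subset
    fun _ hμ => Finset.mem_powerset.2 (cells_subset_iff.2 hμ)

/-- The paper's `(m, ν)`: a first row of length `max m (ν.rowLen 0)` on top of `ν`. -/
def consRow (m : ℕ) (ν : YoungDiagram) : YoungDiagram where
  cells := (Finset.range (max m (ν.rowLen 0))).image (fun j => (0, j))
    ∪ ν.cells.image fun c => (c.1 + 1, c.2)
  isLowerSet := by
    rintro ⟨i, j⟩ ⟨a, b⟩ ⟨hai, hbj⟩ hmem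
    simp only [Finset.coe_union, Finset.coe_image, Set.mem_union, Set.mem_image, Finset.mem_coe,
      Finset.mem_range, Prod.mk.injEq, mem_cells, Prod.exists] at hmem ⊢
    simp only at hai hbj
    rcases hmem with ⟨x, hx, rfl, rfl⟩ | ⟨x, y, hxy, rfl, rfl⟩
    · exact Or.inl ⟨b, by omega, by omega, rfl⟩
    · rcases a with _ | a
      · have := mem_iff_lt_rowLen.1 hxy
        have := ν.rowLen_anti 0 x (Nat.zero_le _)
        exact Or.inl ⟨b, by omega, rfl, rfl⟩
      · exact Or.inr ⟨a, b, ν.up_left_mem (by omega) hbj hxy, rfl, rfl⟩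

variable {m : ℕ} {μ ν : YoungDiagram}

lemma mem_consRow_zero {j : ℕ} : (0, j) ∈ consRow m ν ↔ j < max m (ν.rowLen 0) := by
  rw [← mem_cells]
  simp [consRow]

lemma mem_consRow_succ {i j : ℕ} : (i + 1, j) ∈ consRow m ν ↔ (i, j) ∈ ν := by
  rw [← mem_cells]
  simp [consRow]

lemma rowLen_consRow_zero : (consRow m ν).rowLen 0 = max m (ν.rowLen 0) :=
  rowLen_eq_of_mem_iff fun _ => mem_consRow_zero

lemma rowLen_consRow_succ (i : ℕ) : (consRow m ν).rowLen (i + 1) = ν.rowLen i :=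
  rowLen_eq_of_mem_iff fun _ => by rw [mem_consRow_succ, mem_iff_lt_rowLen]

lemma card_consRow (h : ν.rowLen 0 ≤ m) : (consRow m ν).card = m + ν.card := by
  rw [YoungDiagram.card, consRow, Finset.card_union_of_disjoint,
    Finset.card_image_of_injective _ fun _ _ h => (Prod.mk.inj h).2,
    Finset.card_image_of_injective _ fun _ _ h =>
      Prod.ext (by simpa using (Prod.mk.inj h).1) (Prod.mk.inj h).2,
    Finset.card_range, max_eq_left h]
  simp [Finset.disjoint_left]

lemma consRow_mono_left {a b : ℕ} (hab : a ≤ b) (ν : YoungDiagram) :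
    consRow a ν ≤ consRow b ν := by
  rintro ⟨_ | i, j⟩ hc
  · rw [mem_consRow_zero] at hc ⊢; omega
  · exact mem_consRow_succ.2 (mem_consRow_succ.1 hc)

lemma consRow_mono_right (m : ℕ) (h : μ ≤ ν) : consRow m μ ≤ consRow m ν := by
  rintro ⟨_ | i, j⟩ hc
  · rw [mem_consRow_zero] at hc ⊢; have := rowLen_mono h 0; omega
  · exact mem_consRow_succ.2 (h (mem_consRow_succ.1 hc))

def dropRow (μ : YoungDiagram) : YoungDiagram where
  cells := (μ.cells.filter fun c => c.1 ≠ 0).image fun c => (c.1 - 1, c.2)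
  isLowerSet := by
    rintro ⟨i, j⟩ ⟨a, b⟩ ⟨hai, hbj⟩ hmem
    simp only [Finset.coe_image, Set.mem_image, Finset.mem_coe, Finset.mem_filter, mem_cells,
      Prod.mk.injEq, Prod.exists] at hmem ⊢
    obtain ⟨x, y, ⟨hxy, hx⟩, rfl, rfl⟩ := hmem
    exact ⟨a + 1, b, ⟨μ.up_left_mem (by simp at hai; omega) hbj hxy, by simp⟩, by simp, rfl⟩

lemma mem_dropRow {i j : ℕ} : (i, j) ∈ dropRow μ ↔ (i + 1, j) ∈ μ := by
  rw [← mem_cells]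
  simp only [dropRow, Finset.mem_image, Finset.mem_filter, mem_cells, Prod.mk.injEq,
    Prod.exists]
  constructor
  · rintro ⟨x, y, ⟨h, hx⟩, hxi, rfl⟩
    rwa [show i + 1 = x by omega]
  · exact fun h => ⟨i + 1, j, ⟨h, by simp⟩, by simp, rfl⟩

lemma rowLen_dropRow (i : ℕ) : (dropRow μ).rowLen i = μ.rowLen (i + 1) :=
  rowLen_eq_of_mem_iff fun _ => by rw [mem_dropRow, mem_iff_lt_rowLen]

lemma dropRow_mono (h : μ ≤ ν) : dropRow μ ≤ dropRow ν := fun ⟨_, _⟩ hc =>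
  mem_dropRow.2 (h (mem_dropRow.1 hc))

@[simp]
lemma dropRow_consRow (m : ℕ) (ν : YoungDiagram) : dropRow (consRow m ν) = ν := by
  ext ⟨i, j⟩
  rw [mem_cells, mem_cells, mem_dropRow, mem_consRow_succ]

lemma consRow_dropRow (μ : YoungDiagram) : consRow (μ.rowLen 0) (dropRow μ) = μ := by
  ext ⟨_ | i, j⟩
  · rw [mem_cells, mem_cells, mem_consRow_zero, mem_iff_lt_rowLen, rowLen_dropRow,
      max_eq_left (μ.rowLen_anti 0 1 zero_le_one)]
  · rw [mem_cells, mem_cells, mem_consRow_succ, mem_dropRow]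

lemma consRow_injective (m : ℕ) : Function.Injective (consRow m) := fun μ ν h => by
  rw [← dropRow_consRow m μ, h, dropRow_consRow]

lemma card_eq_rowLen_add_card_dropRow (μ : YoungDiagram) :
    μ.card = μ.rowLen 0 + (dropRow μ).card := by
  conv_lhs => rw [← consRow_dropRow μ]
  rw [card_consRow (by rw [rowLen_dropRow]; exact μ.rowLen_anti 0 1 zero_le_one)]

lemma dropRow_eq_or_rowLen_eq_of_le (hle : μ ≤ ν) (hc : ν.card = μ.card + 1) :
    (dropRow μ = dropRow ν ∧ ν.rowLen 0 = μ.rowLen 0 + 1) ∨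
    (ν.rowLen 0 = μ.rowLen 0 ∧ (dropRow ν).card = (dropRow μ).card + 1) := by
  have hμ := card_eq_rowLen_add_card_dropRow μ
  have hν := card_eq_rowLen_add_card_dropRow ν
  have hrow := rowLen_mono hle 0
  have hdrop := card_mono (dropRow_mono hle)
  rcases hrow.lt_or_eq with hlt | heq
  · exact Or.inl ⟨eq_of_le_of_card_le (dropRow_mono hle) (by omega), by omega⟩
  · exact Or.inr ⟨heq.symm, by omega⟩

noncomputable def lowerCovers (ν : YoungDiagram) : Finset YoungDiagram :=
  ν.finite_Iic.toFinset.filter fun μ => ν.card = μ.card + 1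

@[simp]
lemma mem_lowerCovers {μ ν : YoungDiagram} :
    μ ∈ ν.lowerCovers ↔ μ ≤ ν ∧ ν.card = μ.card + 1 := by
  simp [lowerCovers]

@[simp]
lemma lowerCovers_bot : (⊥ : YoungDiagram).lowerCovers = ∅ := by
  ext; simp

open Classical in
lemma lowerCovers_consRow (h : ν.rowLen 0 ≤ m) :
    (consRow m ν).lowerCovers =
      (if ν.rowLen 0 < m then {consRow (m - 1) ν} else ∅) ∪ ν.lowerCovers.image (consRow m) := by
  ext ρ
  have hcard := card_consRow h
  rw [mem_lowerCovers, Finset.mem_union, Finset.mem_image]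
  constructor
  · rintro ⟨hle, hc⟩
    rw [← consRow_dropRow ρ]
    rcases dropRow_eq_or_rowLen_eq_of_le hle hc with ⟨hdrop, hrow⟩ | ⟨hrow, hdrop⟩
    · rw [rowLen_consRow_zero, max_eq_left h] at hrow
      rw [dropRow_consRow] at hdrop
      have hr : ν.rowLen 0 ≤ ρ.rowLen 0 := by
        rw [← hdrop, rowLen_dropRow]; exact ρ.rowLen_anti 0 1 zero_le_one
      left
      rw [if_pos (by omega), Finset.mem_singleton, hdrop, show ρ.rowLen 0 = m - 1 by omega]
    · rw [rowLen_consRow_zero, max_eq_left h] at hrow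
      rw [dropRow_consRow] at hdrop
      refine Or.inr ⟨dropRow ρ, mem_lowerCovers.2 ⟨?_, hdrop⟩, by rw [hrow]⟩
      simpa using dropRow_mono hle
  · rintro (hρ | ⟨ρ', hρ', rfl⟩)
    · split_ifs at hρ with hlt
      · rw [Finset.mem_singleton.1 hρ, card_consRow (by omega : ν.rowLen 0 ≤ m - 1)]
        exact ⟨consRow_mono_left (Nat.sub_le m 1) ν, by omega⟩
      · simp at hρ
    · obtain ⟨hle, hc⟩ := mem_lowerCovers.1 hρ'
      rw [card_consRow ((rowLen_mono hle 0).trans h)]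
      exact ⟨consRow_mono_right m hle, by omega⟩

end YoungDiagram

open YoungDiagram

def SatChain (μ ν : YoungDiagram) (N : ℕ) : Type :=
  {t : Fin (N + 1) → YoungDiagram //
    t 0 = μ ∧ t (Fin.last N) = ν ∧
    ∀ i : Fin N, t i.castSucc ≤ t i.succ ∧ (t i.succ).card = (t i.castSucc).card + 1}

namespace SatChain

variable {μ ν : YoungDiagram} {N : ℕ}

lemma monotone (t : SatChain μ ν N) : Monotone t.1 :=
  Fin.monotone_iff_le_succ.2 fun i => (t.2.2.2 i).1

lemma le_last (t : SatChain μ ν N) (i : Fin (N + 1)) : t.1 i ≤ ν :=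
  (t.monotone (Fin.le_last i)).trans_eq t.2.2.1

lemma card_apply (t : SatChain μ ν N) (i : Fin (N + 1)) : (t.1 i).card = μ.card + i := by
  induction i using Fin.induction with
  | zero => rw [t.2.1]; rfl
  | succ i ih => rw [(t.2.2.2 i).2, ih, Fin.val_succ, Fin.val_castSucc, add_assoc]

instance : Finite (SatChain μ ν N) :=
  have := ν.finite_Iic.to_subtype
  Finite.of_injective (fun t i => (⟨t.1 i, t.le_last i⟩ : Set.Iic ν)) fun _ _ h =>
    Subtype.ext (funext fun i => congrArg Subtype.val (congrFun h i))

def equivSigmaLowerCovers : SatChain μ ν (N + 1) ≃ Σ ρ : ν.lowerCovers, SatChain μ ρ N where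
  toFun t := ⟨⟨t.1 (Fin.last N).castSucc, mem_lowerCovers.2 (by
      simpa [← t.2.2.1] using t.2.2.2 (Fin.last N))⟩,
    ⟨Fin.init t.1, t.2.1, rfl, fun i => by
      simp only [Fin.init]
      rw [← Fin.succ_castSucc]
      exact t.2.2.2 i.castSucc⟩⟩
  invFun x := ⟨Fin.snoc x.2.1 ν,
    (Fin.snoc_castSucc (α := fun _ => YoungDiagram) (i := 0) _ _).trans x.2.2.1,
    Fin.snoc_last _ _, fun i => by
      induction i using Fin.lastCases with
      | last =>
        rw [Fin.succ_last, Fin.snoc_last, Fin.snoc_castSucc, x.2.2.2.1]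
        exact mem_lowerCovers.1 x.1.2
      | cast i =>
        rw [Fin.succ_castSucc, Fin.snoc_castSucc, Fin.snoc_castSucc]
        exact x.2.2.2.2 i⟩
  left_inv t := Subtype.ext (by simp [← t.2.2.1])
  right_inv x := Sigma.subtype_ext (Subtype.ext (by simpa using x.2.2.2.1))
    (Fin.init_snoc (α := fun _ => YoungDiagram) _ _)

end SatChain

lemma chainCount_succ (μ ν : YoungDiagram) (N : ℕ) :
    chainCount μ ν (N + 1) = ∑ ρ ∈ ν.lowerCovers, chainCount μ ρ N := by
  rw [← Finset.sum_coe_sort]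
  exact (Nat.card_congr SatChain.equivSigmaLowerCovers).trans Nat.card_sigma

@[simp]
lemma dimSYT_bot : dimSYT ⊥ = 1 := by
  rw [dimSYT, card_bot]
  exact Nat.card_eq_one_iff_exists.2 ⟨⟨fun _ => ⊥, rfl, rfl, Fin.elim0⟩, fun t =>
    Subtype.ext (funext fun i => by rw [Fin.fin_one_eq_zero i, t.2.1])⟩

lemma dimSYT_eq_sum_lowerCovers {ν : YoungDiagram} (hν : 0 < ν.card) :
    dimSYT ν = ∑ ρ ∈ ν.lowerCovers, dimSYT ρ := by
  obtain ⟨N, hN⟩ := Nat.exists_eq_add_of_lt hν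
  rw [dimSYT, hN, zero_add, chainCount_succ]
  refine Finset.sum_congr rfl fun ρ hρ => ?_
  rw [dimSYT, show ρ.card = N by have := (mem_lowerCovers.1 hρ).2; omega]

namespace YoungDiagram

variable {m : ℕ} {ν : YoungDiagram}

open Classical in
lemma dimSYT_consRow (h : ν.rowLen 0 ≤ m) (hpos : 0 < m + ν.card) :
    dimSYT (consRow m ν) = (if ν.rowLen 0 < m then dimSYT (consRow (m - 1) ν) else 0) +
      ∑ ρ ∈ ν.lowerCovers, dimSYT (consRow m ρ) := by
  rw [dimSYT_eq_sum_lowerCovers (by rwa [card_consRow h]), lowerCovers_consRow h,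
    Finset.sum_union, Finset.sum_image (consRow_injective m).injOn]
  · split_ifs <;> simp
  · split_ifs with hlt
    · refine Finset.disjoint_singleton_left.2 fun hmem => ?_
      obtain ⟨ρ, hρ, heq⟩ := Finset.mem_image.1 hmem
      have := congrArg (rowLen · 0) heq
      simp only [rowLen_consRow_zero] at this
      omega
    · exact Finset.disjoint_empty_left _

lemma dimSYT_consRow_bot (m : ℕ) : dimSYT (consRow m ⊥) = 1 := by
  induction m with
  | zero => rw [eq_bot_of_card_eq_zero (μ := consRow 0 ⊥) (by simp [card_consRow]), dimSYT_bot]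
  | succ m ih => rw [dimSYT_consRow (by simp) (by simp)]; simpa using ih

theorem dimSYT_consRow_le_choose_mul {m : ℕ} {ν : YoungDiagram} (h : ν.rowLen 0 ≤ m) :
    dimSYT (consRow m ν) ≤ (m + ν.card).choose ν.card * dimSYT ν := by
  induction hn : m + ν.card using Nat.strong_induction_on generalizing m ν with
  | _ n ih =>
  subst hn
  rcases Nat.eq_zero_or_pos ν.card with hj | hj
  · simp [eq_bot_of_card_eq_zero hj, dimSYT_consRow_bot]
  obtain ⟨i, hi⟩ := Nat.exists_eq_add_of_lt hj
  rw [zero_add] at hi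
  have hfirst : (if ν.rowLen 0 < m then dimSYT (consRow (m - 1) ν) else 0) ≤
      (m + i).choose (i + 1) * dimSYT ν := by
    split_ifs with hlt
    · have := ih (m - 1 + ν.card) (by omega) (by omega : ν.rowLen 0 ≤ m - 1) rfl
      rwa [hi, show m - 1 + (i + 1) = m + i by omega] at this
    · exact Nat.zero_le _
  have hcovers : ∑ ρ ∈ ν.lowerCovers, dimSYT (consRow m ρ) ≤ (m + i).choose i * dimSYT ν := by
    rw [dimSYT_eq_sum_lowerCovers hj, Finset.mul_sum]
    refine Finset.sum_le_sum fun ρ hρ => ?_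
    obtain ⟨hle, hc⟩ := mem_lowerCovers.1 hρ
    have hρc : ρ.card = i := by omega
    simpa [hρc] using ih (m + ρ.card) (by omega) ((rowLen_mono hle 0).trans h) rfl
  rw [dimSYT_consRow h (by omega), hi, ← add_assoc, Nat.choose_succ_succ', add_mul]
  linarith

theorem choose_mul_dimSYT_le_dimSYT_consRow {c m : ℕ} {ν : YoungDiagram}
    (hc : ν.rowLen 0 ≤ c) (h : ν.rowLen 0 ≤ m) :
    (m + ν.card - c).choose ν.card * dimSYT ν ≤ dimSYT (consRow m ν) := by
  induction hn : m + ν.card using Nat.strong_induction_on generalizing m ν with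
  | _ n ih =>
  subst hn
  rcases Nat.eq_zero_or_pos ν.card with hj | hj
  · simp [eq_bot_of_card_eq_zero hj, dimSYT_consRow_bot]
  obtain ⟨i, hi⟩ := Nat.exists_eq_add_of_lt hj
  rw [zero_add] at hi
  have hfirst : (m + i - c).choose (i + 1) * dimSYT ν ≤
      (if ν.rowLen 0 < m then dimSYT (consRow (m - 1) ν) else 0) := by
    split_ifs with hlt
    · have := ih (m - 1 + ν.card) (by omega) hc (by omega : ν.rowLen 0 ≤ m - 1) rfl
      rwa [hi, show m - 1 + (i + 1) = m + i by omega] at this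
    · rw [Nat.choose_eq_zero_of_lt (by omega), zero_mul]
  have hcovers : (m + i - c).choose i * dimSYT ν ≤ ∑ ρ ∈ ν.lowerCovers, dimSYT (consRow m ρ) := by
    rw [dimSYT_eq_sum_lowerCovers hj, Finset.mul_sum]
    refine Finset.sum_le_sum fun ρ hρ => ?_
    obtain ⟨hle, hcard⟩ := mem_lowerCovers.1 hρ
    have hρc : ρ.card = i := by omega
    have hρ0 := rowLen_mono hle 0
    simpa [hρc] using ih (m + ρ.card) (by omega) (hρ0.trans hc) (hρ0.trans h) rfl
  rw [dimSYT_consRow h (by omega), hi]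
  calc (m + (i + 1) - c).choose (i + 1) * dimSYT ν
      ≤ (m + i - c + 1).choose (i + 1) * dimSYT ν :=
        Nat.mul_le_mul_right _ (Nat.choose_le_choose _ (by omega))
    _ = (m + i - c).choose i * dimSYT ν + (m + i - c).choose (i + 1) * dimSYT ν := by
        rw [Nat.choose_succ_succ', add_mul]
    _ ≤ _ := by linarith

end YoungDiagram

namespace SatChain

variable {μ ν : YoungDiagram} {N : ℕ} (s : SatChain μ ν N)

/-- The chain as a function on `ℕ`, constant from time `N` on. -/
def get (j : ℕ) : YoungDiagram := s.1 ⟨min j N, by omega⟩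

lemma get_val (i : Fin (N + 1)) : s.get i = s.1 i :=
  congrArg s.1 (Fin.ext (min_eq_left (Nat.lt_succ_iff.1 i.2)))

lemma get_mono : Monotone s.get := fun _ _ h =>
  s.monotone (Fin.mk_le_mk.2 (min_le_min_right N h))

lemma get_zero : s.get 0 = μ := s.2.1

lemma get_of_le {j : ℕ} (hj : N ≤ j) : s.get j = ν :=
  (congrArg s.1 (Fin.ext (min_eq_right hj))).trans s.2.2.1

lemma get_le (j : ℕ) : s.get j ≤ ν := s.le_last _

lemma card_get (j : ℕ) : (s.get j).card = μ.card + min j N := s.card_apply _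

lemma card_get_sdiff {j : ℕ} (hj : j < N) :
    ((s.get (j + 1)).cells \ (s.get j).cells).card = 1 := by
  rw [Finset.card_sdiff_of_subset (cells_subset_iff.2 (s.get_mono j.le_succ))]
  change (s.get (j + 1)).card - (s.get j).card = 1
  rw [card_get, card_get]
  omega

open Classical in
/-- The time at which a cell of `ν` enters the chain (`0` off `ν`). -/
noncomputable def arrival (c : ℕ × ℕ) : ℕ :=
  if h : c ∈ ν then Nat.find (⟨N, by rwa [s.get_of_le le_rfl]⟩ : ∃ j, c ∈ s.get j) else 0

variable {s}

lemma mem_get_iff {c : ℕ × ℕ} (hc : c ∈ ν) {j : ℕ} : c ∈ s.get j ↔ s.arrival c ≤ j := by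
  classical
  rw [arrival, dif_pos hc]
  exact ⟨fun h => Nat.find_min' _ h, fun h => s.get_mono h (Nat.find_spec (p := (c ∈ s.get ·)) _)⟩

lemma arrival_le {c : ℕ × ℕ} (hc : c ∈ ν) : s.arrival c ≤ N :=
  (mem_get_iff hc).1 (by rwa [s.get_of_le le_rfl])

lemma arrival_of_notMem {c : ℕ × ℕ} (hc : c ∉ ν) : s.arrival c = 0 := by
  classical
  rw [arrival, dif_neg hc]

lemma one_le_arrival {c : ℕ × ℕ} (hc : c ∈ ν) (hcμ : c ∉ μ) : 1 ≤ s.arrival c :=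
  Nat.one_le_iff_ne_zero.2 fun h0 => hcμ (by rw [← s.get_zero, mem_get_iff hc, h0])

lemma arrival_mono {a b i j : ℕ} (ha : a ≤ i) (hb : b ≤ j) (hc : (i, j) ∈ ν) :
    s.arrival (a, b) ≤ s.arrival (i, j) :=
  (mem_get_iff (ν.up_left_mem ha hb hc)).1
    ((s.get _).up_left_mem ha hb ((mem_get_iff hc).2 le_rfl))

/-- Each step adds a single cell, so a cell and the cell below it cannot arrive together. -/
lemma arrival_lt_arrival_succ {i j : ℕ} (hc : (i + 1, j) ∈ ν) (hcμ : (i + 1, j) ∉ μ) :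
    s.arrival (i, j) < s.arrival (i + 1, j) := by
  have hc' : (i, j) ∈ ν := ν.up_left_mem (Nat.le_add_right i 1) le_rfl hc
  have he₁ := one_le_arrival (s := s) hc hcμ
  have heN := arrival_le (s := s) hc
  have hle := arrival_mono (s := s) (Nat.le_add_right i 1) le_rfl hc
  by_contra hge
  obtain ⟨e, he⟩ : ∃ e, s.arrival (i + 1, j) = e + 1 := ⟨_, (Nat.succ_pred_eq_of_pos he₁).symm⟩
  have hsub : {(i, j), (i + 1, j)} ⊆ (s.get (e + 1)).cells \ (s.get e).cells := by
    simp only [Finset.insert_subset_iff, Finset.singleton_subset_iff, Finset.mem_sdiff, mem_cells,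
      mem_get_iff hc, mem_get_iff hc']
    omega
  have := Finset.card_le_card hsub
  rw [s.card_get_sdiff (by omega), Finset.card_pair (by simp)] at this
  omega

lemma arrival_lt_arrival {i₁ i₂ j : ℕ} (hi : i₁ < i₂) (hc : (i₂, j) ∈ ν) (hcμ : (i₂, j) ∉ μ) :
    s.arrival (i₁, j) < s.arrival (i₂, j) := by
  obtain ⟨i, rfl⟩ := Nat.exists_eq_add_of_lt hi
  exact (arrival_mono (Nat.le_add_right i₁ i) le_rfl (ν.up_left_mem (by omega) le_rfl hc)).trans_lt
    (arrival_lt_arrival_succ hc hcμ)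

lemma filter_arrival_eq {a : ℕ} (ha : a ≠ 0) :
    ν.cells.filter (s.arrival · = a) = (s.get a).cells \ (s.get (a - 1)).cells := by
  ext c
  simp only [Finset.mem_filter, Finset.mem_sdiff, mem_cells]
  constructor
  · rintro ⟨hc, rfl⟩
    rw [mem_get_iff hc, mem_get_iff hc]
    omega
  · rintro ⟨h, h'⟩
    have hc := s.get_le a h
    rw [mem_get_iff hc] at h h'
    exact ⟨hc, by omega⟩

lemma card_filter_arrival_eq {a : ℕ} (ha : a ≠ 0) :
    (ν.cells.filter (s.arrival · = a)).card = if a ≤ N then 1 else 0 := by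
  rw [filter_arrival_eq ha,
    Finset.card_sdiff_of_subset (cells_subset_iff.2 (s.get_mono (Nat.sub_le a 1)))]
  change (s.get a).card - (s.get (a - 1)).card = _
  rw [card_get, card_get]
  split_ifs <;> omega

end SatChain

namespace SemistandardYoungTableau

variable {ρ : YoungDiagram} (T : SemistandardYoungTableau ρ)

def entryCount (a : ℕ) : ℕ := (ρ.cells.filter fun c => T c.1 c.2 = a).card

lemma entry_mono {a b i j : ℕ} (ha : a ≤ i) (hb : b ≤ j) (hc : (i, j) ∈ ρ) : T a b ≤ T i j :=
  (T.row_weak_of_le hb (ρ.up_left_mem ha le_rfl hc)).trans (T.col_weak ha hc)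

lemma filter_entry_eq_zero_subset_row_zero :
    (ρ.cells.filter fun c => T c.1 c.2 = 0) ⊆ ρ.row 0 := by
  rintro ⟨_ | i, j⟩ hc <;> obtain ⟨hc, h0⟩ := Finset.mem_filter.1 hc
  · exact mem_row_iff.2 ⟨(mem_cells _).1 hc, rfl⟩
  · have := T.col_strict (by omega : 0 < i + 1) ((mem_cells _).1 hc)
    simp only at h0
    omega

lemma entry_le_of_entryCount_eq_zero {k : ℕ} (hT : ∀ a, k < a → T.entryCount a = 0) {i j : ℕ}
    (hc : (i, j) ∈ ρ) : T i j ≤ k := by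
  by_contra! hlt
  have := Finset.card_eq_zero.1 (hT _ hlt)
  rw [Finset.filter_eq_empty_iff] at this
  exact this ((mem_cells _).2 hc) rfl

end SemistandardYoungTableau

open SemistandardYoungTableau

/-- The weight `(m, 1^k)`, with entries numbered from `0`. -/
def weightRowOnes (m k i : ℕ) : ℕ := if i = 0 then m else if i ≤ k then 1 else 0

namespace YoungDiagram

variable {m : ℕ} {μ : YoungDiagram}

lemma entryCount_consRow (T : SemistandardYoungTableau (consRow m μ)) (hrow : ∀ j, T 0 j = 0)
    {a : ℕ} (ha : a ≠ 0) :
    T.entryCount a = (μ.cells.filter fun c => T (c.1 + 1) c.2 = a).card := by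
  refine Finset.card_nbij' (fun c => (c.1 - 1, c.2)) (fun c => (c.1 + 1, c.2)) ?_ ?_ ?_
    (fun _ _ => rfl)
  all_goals rintro ⟨_ | i, j⟩ hc <;> simp_all [mem_consRow_succ]

/-- Zeros can only sit in the first row, which has exactly `m` cells. -/
lemma entry_zero_eq_zero (hm : μ.rowLen 0 ≤ m) {T : SemistandardYoungTableau (consRow m μ)}
    (hT : T.entryCount 0 = m) (j : ℕ) : T 0 j = 0 := by
  by_cases hj : (0, j) ∈ consRow m μ
  · have hrow : (consRow m μ).row 0 = (consRow m μ).cells.filter fun c => T c.1 c.2 = 0 :=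
      (Finset.eq_of_subset_of_card_le T.filter_entry_eq_zero_subset_row_zero (by
        rw [← rowLen_eq_card, rowLen_consRow_zero, max_eq_left hm]; exact hT.ge)).symm
    have := mk_mem_row_iff.2 hj
    rw [hrow, Finset.mem_filter] at this
    exact this.2
  · exact T.zeros hj

def lowerSublevel (T : SemistandardYoungTableau (consRow m μ)) (j : ℕ) : YoungDiagram where
  cells := μ.cells.filter fun c => T (c.1 + 1) c.2 ≤ j
  isLowerSet := by
    rintro ⟨i, j'⟩ ⟨a, b⟩ ⟨ha, hb⟩ hc
    simp only [Finset.coe_filter, mem_cells, Set.mem_ofPred_eq] at hc ⊢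
    exact ⟨μ.up_left_mem ha hb hc.1,
      (T.entry_mono (Nat.succ_le_succ ha) hb (mem_consRow_succ.2 hc.1)).trans hc.2⟩

section lowerSublevel

variable {T : SemistandardYoungTableau (consRow m μ)}

lemma mem_lowerSublevel {j : ℕ} {c : ℕ × ℕ} :
    c ∈ lowerSublevel T j ↔ c ∈ μ ∧ T (c.1 + 1) c.2 ≤ j := by
  rw [← mem_cells]
  simp [lowerSublevel]

lemma lowerSublevel_mono : Monotone (lowerSublevel T) := fun _ _ h _ hc =>
  mem_lowerSublevel.2 ⟨(mem_lowerSublevel.1 hc).1, (mem_lowerSublevel.1 hc).2.trans h⟩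

lemma lowerSublevel_zero : lowerSublevel T 0 = ⊥ :=
  YoungDiagram.ext (Finset.eq_empty_of_forall_notMem fun ⟨i, j⟩ hc => by
    obtain ⟨hc, h0⟩ := mem_lowerSublevel.1 hc
    have := T.col_strict (by omega : 0 < i + 1) (mem_consRow_succ.2 hc)
    simp only at h0
    omega)

lemma lowerSublevel_card (hT : ∀ a, T.entryCount a = weightRowOnes m μ.card a) :
    lowerSublevel T μ.card = μ :=
  YoungDiagram.ext (Finset.filter_true_of_mem fun ⟨_, _⟩ hc =>
    T.entry_le_of_entryCount_eq_zero
      (fun a ha => by rw [hT, weightRowOnes, if_neg (by omega), if_neg (by omega)])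
      (mem_consRow_succ.2 ((mem_cells _).1 hc)))

lemma card_lowerSublevel_succ (hm : μ.rowLen 0 ≤ m)
    (hT : ∀ a, T.entryCount a = weightRowOnes m μ.card a) {j : ℕ} (hj : j < μ.card) :
    (lowerSublevel T (j + 1)).card = (lowerSublevel T j).card + 1 := by
  have hsplit : (μ.cells.filter fun c => T (c.1 + 1) c.2 ≤ j + 1) =
      (μ.cells.filter fun c => T (c.1 + 1) c.2 ≤ j) ∪
        μ.cells.filter fun c => T (c.1 + 1) c.2 = j + 1 := by
    rw [← Finset.filter_or]
    exact Finset.filter_congr fun _ _ => by omega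
  have hdisj : Disjoint (μ.cells.filter fun c => T (c.1 + 1) c.2 ≤ j)
      (μ.cells.filter fun c => T (c.1 + 1) c.2 = j + 1) :=
    Finset.disjoint_filter.2 fun _ _ h => by omega
  have hone := hT (j + 1)
  rw [entryCount_consRow T (entry_zero_eq_zero hm (hT 0)) (a := j + 1) (by omega), weightRowOnes,
    if_neg (by omega), if_pos (by omega)] at hone
  change (μ.cells.filter fun c => T (c.1 + 1) c.2 ≤ j + 1).card =
    (μ.cells.filter fun c => T (c.1 + 1) c.2 ≤ j).card + 1
  rw [hsplit, Finset.card_union_of_disjoint hdisj, hone]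

end lowerSublevel

def chainOfTableau (hm : μ.rowLen 0 ≤ m) (T : SemistandardYoungTableau (consRow m μ))
    (hT : ∀ a, T.entryCount a = weightRowOnes m μ.card a) : SatChain ⊥ μ μ.card :=
  ⟨fun i => lowerSublevel T i, lowerSublevel_zero, lowerSublevel_card hT,
    fun i => ⟨lowerSublevel_mono (Nat.le_succ i), card_lowerSublevel_succ hm hT i.2⟩⟩

noncomputable def tableauOfChain (s : SatChain ⊥ μ μ.card) :
    SemistandardYoungTableau (consRow m μ) where
  entry i j := match i with
    | 0 => 0
    | i + 1 => s.arrival (i, j)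
  row_weak' {i j₁ j₂} hj hc := by
    rcases i with _ | i
    · exact le_rfl
    · exact SatChain.arrival_mono le_rfl hj.le (mem_consRow_succ.1 hc)
  col_strict' {i₁ i₂ j} hi hc := by
    obtain ⟨i₂, rfl⟩ : ∃ i, i₂ = i + 1 := Nat.exists_eq_succ_of_ne_zero (by omega)
    have hc' := mem_consRow_succ.1 hc
    rcases i₁ with _ | i₁
    · exact SatChain.one_le_arrival hc' (notMem_bot _)
    · exact SatChain.arrival_lt_arrival (by omega) hc' (notMem_bot _)
  zeros' {i j} hc := by
    rcases i with _ | i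
    · rfl
    · exact SatChain.arrival_of_notMem (fun h => hc (mem_consRow_succ.2 h))

lemma entryCount_tableauOfChain (hm : μ.rowLen 0 ≤ m) (s : SatChain ⊥ μ μ.card) (a : ℕ) :
    (tableauOfChain (m := m) s).entryCount a = weightRowOnes m μ.card a := by
  rcases eq_or_ne a 0 with rfl | ha
  · have hrow : ((consRow m μ).cells.filter fun c => tableauOfChain (m := m) s c.1 c.2 = 0) =
        (consRow m μ).row 0 := by
      refine Finset.Subset.antisymm (filter_entry_eq_zero_subset_row_zero _) fun ⟨i, j⟩ hc => ?_
      obtain ⟨hc, rfl⟩ := mem_row_iff.1 hc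
      exact Finset.mem_filter.2 ⟨(mem_cells _).2 hc, rfl⟩
    rw [entryCount, hrow, ← rowLen_eq_card, rowLen_consRow_zero, max_eq_left hm, weightRowOnes,
      if_pos rfl]
  · rw [entryCount_consRow _ (fun _ => rfl) ha, weightRowOnes, if_neg ha]
    exact SatChain.card_filter_arrival_eq ha

lemma arrival_chainOfTableau (hm : μ.rowLen 0 ≤ m) {T : SemistandardYoungTableau (consRow m μ)}
    (hT : ∀ a, T.entryCount a = weightRowOnes m μ.card a) {i j : ℕ} (hc : (i, j) ∈ μ) :
    (chainOfTableau hm T hT).arrival (i, j) = T (i + 1) j := by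
  have hget : ∀ t, (chainOfTableau hm T hT).get t = lowerSublevel T (min t μ.card) := fun _ => rfl
  have hk : T (i + 1) j ≤ μ.card := (mem_lowerSublevel.1 ((lowerSublevel_card hT).symm ▸ hc)).2
  refine le_antisymm ((SatChain.mem_get_iff hc).1 ?_) ?_
  · rw [hget, mem_lowerSublevel]
    exact ⟨hc, le_min le_rfl hk⟩
  · have := (SatChain.mem_get_iff (s := chainOfTableau hm T hT) hc).2 le_rfl
    rw [hget, mem_lowerSublevel] at this
    exact this.2.trans (min_le_left _ _)

noncomputable def tableauEquivSatChain (hm : μ.rowLen 0 ≤ m) :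
    {T : SemistandardYoungTableau (consRow m μ) //
      ∀ a, T.entryCount a = weightRowOnes m μ.card a} ≃ SatChain ⊥ μ μ.card where
  toFun T := chainOfTableau hm T.1 T.2
  invFun s := ⟨tableauOfChain s, entryCount_tableauOfChain hm s⟩
  left_inv T := Subtype.ext <| SemistandardYoungTableau.ext fun i j => by
    rcases i with _ | i
    · exact (entry_zero_eq_zero hm (T.2 0) j).symm
    · by_cases hc : (i, j) ∈ μ
      · exact arrival_chainOfTableau hm T.2 hc
      · exact (SatChain.arrival_of_notMem hc).trans
          (T.1.zeros fun h => hc (mem_consRow_succ.1 h)).symm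
  right_inv s := Subtype.ext <| funext fun i => YoungDiagram.ext <| Finset.ext fun c => by
    rw [mem_cells, mem_cells]
    change c ∈ lowerSublevel (tableauOfChain s) i ↔ c ∈ s.1 i
    rw [mem_lowerSublevel, ← s.get_val]
    exact ⟨fun h => (SatChain.mem_get_iff h.1).2 h.2,
      fun h => ⟨s.get_le _ h, (SatChain.mem_get_iff (s.get_le _ h)).1 h⟩⟩

theorem kostka_consRow (hm : μ.rowLen 0 ≤ m) :
    kostka (consRow m μ) (weightRowOnes m μ.card) = dimSYT μ :=
  Nat.card_congr (tableauEquivSatChain hm)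

theorem choose_mul_le_kostka_mul_dimSYT_consRow_le {n : ℕ} {μ : YoungDiagram}
    (hn : μ.card + μ.rowLen 0 ≤ n) :
    dimSYT μ ^ 2 * (n - μ.rowLen 0).choose μ.card ≤
        kostka (consRow (n - μ.card) μ) (weightRowOnes (n - μ.card) μ.card) *
          dimSYT (consRow (n - μ.card) μ) ∧
      kostka (consRow (n - μ.card) μ) (weightRowOnes (n - μ.card) μ.card) *
          dimSYT (consRow (n - μ.card) μ) ≤ dimSYT μ ^ 2 * n.choose μ.card := by
  have hm : μ.rowLen 0 ≤ n - μ.card := by omega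
  have hlower := choose_mul_dimSYT_le_dimSYT_consRow le_rfl hm
  have hupper := dimSYT_consRow_le_choose_mul hm
  rw [show n - μ.card + μ.card - μ.rowLen 0 = n - μ.rowLen 0 by omega] at hlower
  rw [show n - μ.card + μ.card = n by omega] at hupper
  rw [kostka_consRow hm, sq]
  constructor
  · calc dimSYT μ * dimSYT μ * (n - μ.rowLen 0).choose μ.card
        = dimSYT μ * ((n - μ.rowLen 0).choose μ.card * dimSYT μ) := by ring
      _ ≤ _ := Nat.mul_le_mul_left _ hlower
  · calc dimSYT μ * dimSYT (consRow (n - μ.card) μ)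
        ≤ dimSYT μ * (n.choose μ.card * dimSYT μ) := Nat.mul_le_mul_left _ hupper
      _ = _ := by ring

end YoungDiagram

open Filter Topology Asymptotics

lemma isEquivalent_natCast_sub (c : ℕ) :
    (fun n : ℕ => ((n - c : ℕ) : ℝ)) ~[atTop] fun n => (n : ℝ) := by
  rw [isEquivalent_iff_tendsto_one (eventually_atTop.2 ⟨1, fun n hn => by positivity⟩)]
  refine ((tendsto_natCast_div_add_atTop (c : ℝ)).comp (tendsto_sub_atTop_nat c)).congr' ?_
  filter_upwards [eventually_ge_atTop c] with n hn
  simp [Nat.cast_sub hn]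

lemma isEquivalent_choose_sub (c k : ℕ) :
    (fun n : ℕ => ((n - c).choose k : ℝ)) ~[atTop] fun n => (n.choose k : ℝ) :=
  (((isEquivalent_choose k).comp_tendsto (tendsto_sub_atTop_nat c)).trans
    (((isEquivalent_natCast_sub c).pow k).div IsEquivalent.refl)).trans (isEquivalent_choose k).symm

theorem tendsto_div_factorial_div_of_choose_bounds {f : ℕ → ℕ} {A c k : ℕ}
    (hf : ∀ᶠ n in atTop, A * (n - c).choose k ≤ f n ∧ f n ≤ A * n.choose k) :
    Tendsto (fun n => (f n : ℝ) / (n.factorial / (n - k).factorial)) atTop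
      (𝓝 (A / k.factorial)) := by
  set D : ℕ → ℝ := fun n => n.factorial / (n - k).factorial
  have hD : ∀ᶠ n in atTop, D n = n.choose k * k.factorial := by
    filter_upwards [eventually_ge_atTop k] with n hn
    rw [div_eq_iff (by positivity), ← Nat.choose_mul_factorial_mul_factorial hn]
    push_cast
    ring
  have hupper : (fun n => (A * n.choose k : ℝ) / D n) =ᶠ[atTop] fun _ => (A / k.factorial : ℝ) := by
    filter_upwards [hD, eventually_ge_atTop k] with n hn hk
    rw [hn]
    field_simp [(Nat.choose_pos hk).ne']
  have hlower : Tendsto (fun n => (A * (n - c).choose k : ℝ) / D n) atTop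
      (𝓝 (A / k.factorial)) :=
    ((IsEquivalent.refl.mul (isEquivalent_choose_sub c k)).div IsEquivalent.refl).symm.tendsto_nhds
      (tendsto_const_nhds.congr' hupper.symm)
  refine tendsto_of_tendsto_of_tendsto_of_le_of_le' hlower
    (tendsto_const_nhds.congr' hupper.symm) ?_ ?_
  all_goals filter_upwards [hf] with n hn
  · exact div_le_div_of_nonneg_right (by exact_mod_cast hn.1) (by positivity)
  · exact div_le_div_of_nonneg_right (by exact_mod_cast hn.2) (by positivity)

/-- For a partition `μ` of `k` and the weight `1^k`, the sequence
`K_{(n-k,μ),(n-k,1^k)} · dim (n-k,μ) / (n!/(n-k)!)` tends to the Plancherel weight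
`(dim μ)²/k!` as `n → ∞`.  Here `f n` encodes `K_{(n-k,μ),(n-k,1^k)} · dim (n-k,μ)`, the
shape `(n-k,μ)` being characterized by its row lengths. -/
theorem kostka_dim_tendsto_plancherel (k : ℕ) (mu : YoungDiagram) (hmu : mu.card = k)
    (f : ℕ → ℕ)
    (hf : ∀ n : ℕ, k + mu.rowLen 0 ≤ n → ∀ mu' : YoungDiagram,
      mu'.rowLen 0 = n - k → (∀ i : ℕ, mu'.rowLen (i + 1) = mu.rowLen i) →
      f n = kostka mu'
          (fun i => if i = 0 then n - k else if i ≤ k then 1 else 0) * dimSYT mu') :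
    Filter.Tendsto
      (fun n : ℕ => (f n : ℝ) / ((n.factorial : ℝ) / ((n - k).factorial : ℝ)))
      Filter.atTop
      (nhds ((dimSYT mu : ℝ) ^ 2 / (k.factorial : ℝ))) := by
  subst hmu
  have hbounds : ∀ᶠ n in atTop, dimSYT mu ^ 2 * (n - mu.rowLen 0).choose mu.card ≤ f n ∧
      f n ≤ dimSYT mu ^ 2 * n.choose mu.card := by
    filter_upwards [eventually_ge_atTop (mu.card + mu.rowLen 0)] with n hn
    have hm : mu.rowLen 0 ≤ n - mu.card := by omega
    rw [hf n hn (consRow (n - mu.card) mu) (by rw [rowLen_consRow_zero, max_eq_left hm])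
      rowLen_consRow_succ]
    exact choose_mul_le_kostka_mul_dimSYT_consRow_le hn
  simpa using tendsto_div_factorial_div_of_choose_bounds hbounds
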